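/- Let W be a weak fundamental localizer and Q a class of squares in Cat satisfying: (CS3v, colocal descent) for any square D with top edge v : A' → A, if for every object a of A the vertical composite D ∘v D^d_{v,a} belongs to Q, where D^d_{v,a} is the comma square of v at a (top a\A' → e, right a : e → A, left a\A' → A', bottom v, canonical 2-cell), then D ∈ Q; and (CI1₀) for every W-aspherical small category A, the square with all of left, right, top, bottom between A, e, e, e (top A → e, left A → e, right id_e, bottom id_e, identity 2-cell) is in Q. Then Q satisfies (CI1d): for every W-coaspherical functor u : A → B, the square with top u, left A → e, right B → e, bottom id_e and identity 2-cell is in Q. -/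

import Mathlib

open CategoryTheory

universe u

namespace Paper

/-- A class of functors between small categories. -/
abbrev FunctorClass : Type (u + 1) :=
  ∀ ⦃A B : Type u⦄ [SmallCategory A] [SmallCategory B], (A ⥤ B) → Prop

/-- The punctual category `e`. -/
abbrev PtCat : Type u := Discrete PUnit.{u + 1}

/-- The category `A` is `W`-aspherical: the functor `A ⥤ e` lies in `W`. -/
def IsAsphericalCat (W : FunctorClass.{u}) (A : Type u) [SmallCategory A] : Prop :=
  W (Functor.star A)

/-- The functor `F : A ⥤ B` is `W`-aspherical: every comma category `A/b` is `W`-aspherical. -/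
def IsAsphericalFunctor (W : FunctorClass.{u}) {A B : Type u} [SmallCategory A]
    [SmallCategory B] (F : A ⥤ B) : Prop :=
  ∀ b : B, IsAsphericalCat W (CostructuredArrow F b)

/-- The functor `F : A ⥤ B` is `W`-coaspherical: every comma category `b\A` is `W`-aspherical. -/
def IsCoasphericalFunctor (W : FunctorClass.{u}) {A B : Type u} [SmallCategory A]
    [SmallCategory B] (F : A ⥤ B) : Prop :=
  ∀ b : B, IsAsphericalCat W (StructuredArrow b F)

/-- For `F : A ⥤ B` and `b : B`, the induced functor `A/b ⥤ B/b`. -/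
def sliceInduced {A B : Type u} [SmallCategory A] [SmallCategory B] (F : A ⥤ B) (b : B) :
    CostructuredArrow F b ⥤ Over b where
  obj x := Over.mk x.hom
  map {x y} f := Over.homMk (F.map f.left) (by simp [CostructuredArrow.w f])

/-- For a strictly commutative triangle given by `F : A ⥤ B`, `G : B ⥤ C` and `c : C`,
the induced functor `A/c ⥤ B/c`. -/
def triangleSlice {A B C : Type u} [SmallCategory A] [SmallCategory B] [SmallCategory C]
    (F : A ⥤ B) (G : B ⥤ C) (c : C) :
    CostructuredArrow (F ⋙ G) c ⥤ CostructuredArrow G c where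
  obj x := CostructuredArrow.mk (Y := F.obj x.left) x.hom
  map {x y} f := CostructuredArrow.homMk (F.map f.left) (CostructuredArrow.w f)

/-- For a strictly commutative triangle given by `F : A ⥤ B`, `G : B ⥤ C` and `c : C`,
the induced functor `c\A ⥤ c\B`. -/
def triangleCoslice {A B C : Type u} [SmallCategory A] [SmallCategory B] [SmallCategory C]
    (F : A ⥤ B) (G : B ⥤ C) (c : C) :
    StructuredArrow c (F ⋙ G) ⥤ StructuredArrow c G where
  obj x := StructuredArrow.mk (Y := F.obj x.right) x.hom
  map {x y} f := StructuredArrow.homMk (F.map f.right) (StructuredArrow.w f)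


/-- `W` is a weak fundamental localizer. -/
structure IsWeakFundamentalLocalizer (W : FunctorClass.{u}) : Prop where
  id_mem : ∀ (A : Type u) [SmallCategory A], W (𝟭 A)
  comp_mem : ∀ {A B C : Type u} [SmallCategory A] [SmallCategory B] [SmallCategory C]
      (F : A ⥤ B) (G : B ⥤ C), W F → W G → W (F ⋙ G)
  of_comp_left : ∀ {A B C : Type u} [SmallCategory A] [SmallCategory B] [SmallCategory C]
      (F : A ⥤ B) (G : B ⥤ C), W F → W (F ⋙ G) → W G
  of_comp_right : ∀ {A B C : Type u} [SmallCategory A] [SmallCategory B] [SmallCategory C]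
      (F : A ⥤ B) (G : B ⥤ C), W G → W (F ⋙ G) → W F
  retract_mem : ∀ {A A' : Type u} [SmallCategory A] [SmallCategory A']
      (i : A' ⥤ A) (r : A ⥤ A'), i ⋙ r = 𝟭 A' → W (r ⋙ i) → W r
  star_mem : ∀ (A : Type u) [SmallCategory A], Limits.HasTerminal A → W (Functor.star A)
  mem_of_slices : ∀ {A B : Type u} [SmallCategory A] [SmallCategory B] (F : A ⥤ B),
      (∀ b : B, W (sliceInduced F b)) → W F

/-- `W` is a fundamental localizer. -/
structure IsFundamentalLocalizer (W : FunctorClass.{u}) : Prop where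
  id_mem : ∀ (A : Type u) [SmallCategory A], W (𝟭 A)
  comp_mem : ∀ {A B C : Type u} [SmallCategory A] [SmallCategory B] [SmallCategory C]
      (F : A ⥤ B) (G : B ⥤ C), W F → W G → W (F ⋙ G)
  of_comp_left : ∀ {A B C : Type u} [SmallCategory A] [SmallCategory B] [SmallCategory C]
      (F : A ⥤ B) (G : B ⥤ C), W F → W (F ⋙ G) → W G
  of_comp_right : ∀ {A B C : Type u} [SmallCategory A] [SmallCategory B] [SmallCategory C]
      (F : A ⥤ B) (G : B ⥤ C), W G → W (F ⋙ G) → W F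
  retract_mem : ∀ {A A' : Type u} [SmallCategory A] [SmallCategory A']
      (i : A' ⥤ A) (r : A ⥤ A'), i ⋙ r = 𝟭 A' → W (r ⋙ i) → W r
  star_mem : ∀ (A : Type u) [SmallCategory A], Limits.HasTerminal A → W (Functor.star A)
  mem_of_rel_slices : ∀ {A B C : Type u} [SmallCategory A] [SmallCategory B] [SmallCategory C]
      (F : A ⥤ B) (G : B ⥤ C), (∀ c : C, W (triangleSlice F G c)) → W F


section Squares

variable {A A' B B' : Type u} [SmallCategory A] [SmallCategory A']
  [SmallCategory B] [SmallCategory B']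

/-- The functor `A'/b' ⥤ A/w(b')` induced by a square `(u, u', v, w, α)`. -/
def squareSlice (u : A ⥤ B) (u' : A' ⥤ B') (v : A' ⥤ A) (w : B' ⥤ B)
    (α : v ⋙ u ⟶ u' ⋙ w) (b' : B') :
    CostructuredArrow u' b' ⥤ CostructuredArrow u (w.obj b') where
  obj x := CostructuredArrow.mk (Y := v.obj x.left) (α.app x.left ≫ w.map x.hom)
  map {x y} f := CostructuredArrow.homMk (v.map f.left) (by
    have h := α.naturality f.left
    dsimp at h ⊢
    rw [← Category.assoc, h, Category.assoc, ← Functor.map_comp, CostructuredArrow.w f])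

/-- The functor `a\A' ⥤ u(a)\B'` induced by a square `(u, u', v, w, α)`. -/
def squareCoslice (u : A ⥤ B) (u' : A' ⥤ B') (v : A' ⥤ A) (w : B' ⥤ B)
    (α : v ⋙ u ⟶ u' ⋙ w) (a : A) :
    StructuredArrow a v ⥤ StructuredArrow (u.obj a) w where
  obj x := StructuredArrow.mk (Y := u'.obj x.right) (u.map x.hom ≫ α.app x.right)
  map {x y} f := StructuredArrow.homMk (u'.map f.right) (by
    have h := α.naturality f.right
    dsimp at h ⊢
    rw [Category.assoc, ← h, ← Category.assoc, ← Functor.map_comp, StructuredArrow.w f])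

/-- The category `A'_{(a, b', g)}` attached to a square `(u, u', v, w, α)` and a triple
`(a, b', g : u(a) ⟶ w(b'))`. -/
structure SquareFiber (u : A ⥤ B) (u' : A' ⥤ B') (v : A' ⥤ A) (w : B' ⥤ B)
    (α : v ⋙ u ⟶ u' ⋙ w) (a : A) (b' : B') (g : u.obj a ⟶ w.obj b') : Type u where
  pt : A'
  f : a ⟶ v.obj pt
  g' : u'.obj pt ⟶ b'
  fac : u.map f ≫ α.app pt ≫ w.map g' = g

instance (u : A ⥤ B) (u' : A' ⥤ B') (v : A' ⥤ A) (w : B' ⥤ B)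
    (α : v ⋙ u ⟶ u' ⋙ w) (a : A) (b' : B') (g : u.obj a ⟶ w.obj b') :
    Category (SquareFiber u u' v w α a b' g) where
  Hom x y := { h : x.pt ⟶ y.pt // x.f ≫ v.map h = y.f ∧ u'.map h ≫ y.g' = x.g' }
  id x := ⟨𝟙 x.pt, by simp, by simp⟩
  comp {x y z} f g := ⟨f.1 ≫ g.1, by
      rw [Functor.map_comp, ← Category.assoc, f.2.1, g.2.1], by
      rw [Functor.map_comp, Category.assoc, g.2.2, f.2.2]⟩
  id_comp f := by apply Subtype.ext; simp
  comp_id f := by apply Subtype.ext; simp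
  assoc f g h := by apply Subtype.ext; simp

/-- A square `(u, u', v, w, α)` is `W`-exact. -/
def IsExactSquare (W : FunctorClass.{u}) (u : A ⥤ B) (u' : A' ⥤ B') (v : A' ⥤ A)
    (w : B' ⥤ B) (α : v ⋙ u ⟶ u' ⋙ w) : Prop :=
  ∀ b' : B', IsCoasphericalFunctor W (squareSlice u u' v w α b')

/-- The 2-cell of the opposite square. -/
def squareOpCell (u : A ⥤ B) (u' : A' ⥤ B') (v : A' ⥤ A) (w : B' ⥤ B)
    (α : v ⋙ u ⟶ u' ⋙ w) : u'.op ⋙ w.op ⟶ v.op ⋙ u.op :=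
  NatTrans.op α

end Squares

section Comps

/-- The 2-cell of the horizontal composite of two squares. -/
def hcomp2cell {A A' A'' B B' B'' : Type u}
    [SmallCategory A] [SmallCategory A'] [SmallCategory A'']
    [SmallCategory B] [SmallCategory B'] [SmallCategory B'']
    {u : A ⥤ B} {u' : A' ⥤ B'} {u'' : A'' ⥤ B''}
    {v : A' ⥤ A} {w : B' ⥤ B} {v' : A'' ⥤ A'} {w' : B'' ⥤ B'}
    (α : v ⋙ u ⟶ u' ⋙ w) (α' : v' ⋙ u' ⟶ u'' ⋙ w') :
    (v' ⋙ v) ⋙ u ⟶ u'' ⋙ (w' ⋙ w) :=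
  Functor.whiskerLeft v' α ≫ Functor.whiskerRight α' w

/-- The 2-cell of the vertical composite of two squares. -/
def vcomp2cell {A A' B B' C C' : Type u}
    [SmallCategory A] [SmallCategory A'] [SmallCategory B] [SmallCategory B']
    [SmallCategory C] [SmallCategory C']
    {u : A ⥤ B} {u' : A' ⥤ B'} {v : A' ⥤ A} {w : B' ⥤ B}
    {x : B ⥤ C} {x' : B' ⥤ C'} {y : C' ⥤ C}
    (α : v ⋙ u ⟶ u' ⋙ w) (β : w ⋙ x ⟶ x' ⋙ y) :
    v ⋙ (u ⋙ x) ⟶ (u' ⋙ x') ⋙ y :=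
  Functor.whiskerRight α x ≫ Functor.whiskerLeft u' β

end Comps

section Fibers

variable {A B : Type u} [SmallCategory A] [SmallCategory B]

/-- The fiber `A_b` of `F : A ⥤ B` at `b : B`. -/
structure CatFiber (F : A ⥤ B) (b : B) : Type u where
  obj : A
  eq : F.obj obj = b

instance (F : A ⥤ B) (b : B) : Category (CatFiber F b) where
  Hom x y := { f : x.obj ⟶ y.obj // F.map f = eqToHom (x.eq.trans y.eq.symm) }
  id x := ⟨𝟙 x.obj, by simp⟩
  comp {x y z} f g := ⟨f.1 ≫ g.1, by rw [Functor.map_comp, f.2, g.2, eqToHom_trans]⟩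
  id_comp f := by apply Subtype.ext; simp
  comp_id f := by apply Subtype.ext; simp
  assoc f g h := by apply Subtype.ext; simp

/-- The canonical functor `A_b ⥤ A/b`. -/
def fiberToSlice (F : A ⥤ B) (b : B) : CatFiber F b ⥤ CostructuredArrow F b where
  obj x := CostructuredArrow.mk (Y := x.obj) (eqToHom x.eq)
  map {x y} f := CostructuredArrow.homMk f.1 (by simp [f.2])

/-- The canonical functor `A_b ⥤ b\A`. -/
def fiberToCoslice (F : A ⥤ B) (b : B) : CatFiber F b ⥤ StructuredArrow b F where
  obj x := StructuredArrow.mk (Y := x.obj) (eqToHom x.eq.symm)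
  map {x y} f := StructuredArrow.homMk f.1 (by simp [f.2])

/-- The functor `F` is `W`-proper. -/
def IsProper (W : FunctorClass.{u}) (F : A ⥤ B) : Prop :=
  ∀ b : B, IsCoasphericalFunctor W (fiberToSlice F b)

/-- The functor `F` is `W`-smooth. -/
def IsSmooth (W : FunctorClass.{u}) (F : A ⥤ B) : Prop :=
  ∀ b : B, IsAsphericalFunctor W (fiberToCoslice F b)

/-- The functor `F` is a precofibration: each canonical functor `A_b ⥤ A/b` admits a left
adjoint. -/
def IsPrecofibration (F : A ⥤ B) : Prop :=
  ∀ b : B, (fiberToSlice F b).IsRightAdjoint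

end Fibers

/-- `F` is an isomorphism of categories. -/
def IsCatIso {A B : Type u} [SmallCategory A] [SmallCategory B] (F : A ⥤ B) : Prop :=
  ∃ G : B ⥤ A, F ⋙ G = 𝟭 A ∧ G ⋙ F = 𝟭 B

section Pullback

variable {A B B' : Type u} [SmallCategory A] [SmallCategory B] [SmallCategory B']

/-- The strict pullback `B' ×_B A` of `u : A ⥤ B` and `w : B' ⥤ B`. -/
structure CatPullback (u : A ⥤ B) (w : B' ⥤ B) : Type u where
  fst : B'
  snd : A
  eq : w.obj fst = u.obj snd

instance (u : A ⥤ B) (w : B' ⥤ B) : Category (CatPullback u w) where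
  Hom x y := { p : (x.fst ⟶ y.fst) × (x.snd ⟶ y.snd) //
    w.map p.1 ≫ eqToHom y.eq = eqToHom x.eq ≫ u.map p.2 }
  id x := ⟨(𝟙 x.fst, 𝟙 x.snd), by simp⟩
  comp {x y z} f g := ⟨(f.1.1 ≫ g.1.1, f.1.2 ≫ g.1.2), by
    rw [Functor.map_comp, Functor.map_comp, Category.assoc, g.2, ← Category.assoc, f.2,
      Category.assoc]⟩
  id_comp f := by apply Subtype.ext; simp
  comp_id f := by apply Subtype.ext; simp
  assoc f g h := by apply Subtype.ext; simp

/-- First projection of the strict pullback. -/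
def pbFst (u : A ⥤ B) (w : B' ⥤ B) : CatPullback u w ⥤ B' where
  obj x := x.fst
  map f := f.1.1

/-- Second projection of the strict pullback. -/
def pbSnd (u : A ⥤ B) (w : B' ⥤ B) : CatPullback u w ⥤ A where
  obj x := x.snd
  map f := f.1.2

theorem pb_comm (u : A ⥤ B) (w : B' ⥤ B) : pbSnd u w ⋙ u = pbFst u w ⋙ w := by
  have hobj : ∀ x : CatPullback u w, (pbSnd u w ⋙ u).obj x = (pbFst u w ⋙ w).obj x :=
    fun x => x.eq.symm
  refine CategoryTheory.Functor.ext hobj (fun x y f => ?_)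
  have h := f.2
  dsimp only [Functor.comp_map, pbFst, pbSnd]
  rw [h]
  first
    | (erw [eqToHom_trans_assoc, eqToHom_refl, Category.id_comp]; done)
    | (erw [eqToHom_trans_assoc]; simp; done)
    | exact ((Category.id_comp _).symm.trans
        (congrArg (· ≫ _) (eqToHom_trans _ _).symm)).trans (Category.assoc _ _ _)

/-- The comparison functor from the top-left corner of a commutative square to the
strict pullback. -/
def toPullback {A' : Type u} [SmallCategory A'] (u : A ⥤ B) (u' : A' ⥤ B') (v : A' ⥤ A)
    (w : B' ⥤ B) (h : v ⋙ u = u' ⋙ w) : A' ⥤ CatPullback u w where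
  obj a' := ⟨u'.obj a', v.obj a', (Functor.congr_obj h a').symm⟩
  map {x y} f := ⟨(u'.map f, v.map f), by
    have := Functor.congr_hom h f
    dsimp at this
    rw [this]
    simp⟩
  map_id x := by
    apply Subtype.ext
    show (u'.map (𝟙 x), v.map (𝟙 x)) = (𝟙 _, 𝟙 _)
    simp
  map_comp f g := by
    apply Subtype.ext
    show (u'.map _, v.map _) = (u'.map _ ≫ u'.map _, v.map _ ≫ v.map _)
    simp

end Pullback

section BaseChange

variable {A A' B B' : Type u} [SmallCategory A] [SmallCategory A']
  [SmallCategory B] [SmallCategory B']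

/-- The base-change morphism `v ∘ r' ⟶ r ∘ w` associated with a square whose vertical
edges admit right adjoints. -/
def baseChangeR {u : A ⥤ B} {u' : A' ⥤ B'} {v : A' ⥤ A} {w : B' ⥤ B}
    {r : B ⥤ A} {r' : B' ⥤ A'} (adj : u ⊣ r) (adj' : u' ⊣ r')
    (α : v ⋙ u ⟶ u' ⋙ w) : r' ⋙ v ⟶ w ⋙ r :=
  Functor.whiskerLeft (r' ⋙ v) adj.unit ≫ Functor.whiskerLeft r' (Functor.whiskerRight α r) ≫
    Functor.whiskerRight adj'.counit (w ⋙ r)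

/-- The base-change morphism `w'' ∘ u ⟶ u' ∘ v''` associated with a square whose horizontal
edges admit left adjoints. -/
def baseChangeL {u : A ⥤ B} {u' : A' ⥤ B'} {v : A' ⥤ A} {w : B' ⥤ B}
    {v'' : A ⥤ A'} {w'' : B ⥤ B'} (adjv : v'' ⊣ v) (adjw : w'' ⊣ w)
    (α : v ⋙ u ⟶ u' ⋙ w) : u ⋙ w'' ⟶ v'' ⋙ u' :=
  Functor.whiskerRight adjv.unit (u ⋙ w'') ≫ Functor.whiskerLeft v'' (Functor.whiskerRight α w'') ≫
    Functor.whiskerLeft (v'' ⋙ u') adjw.counit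

end BaseChange

section LocColoc

variable {X Y C : Type u} [SmallCategory X] [SmallCategory Y] [SmallCategory C]

/-- `F : X ⥤ Y`, viewed over `C` via `P : Y ⥤ C` (and `F ⋙ P` on `X`), is a `W`-equivalence
locally on `C`. -/
def IsLocallyEquiv (W : FunctorClass.{u}) (F : X ⥤ Y) (P : Y ⥤ C) : Prop :=
  ∀ c : C, W (triangleSlice F P c)

/-- `F : X ⥤ Y`, viewed over `C` via `P : Y ⥤ C` (and `F ⋙ P` on `X`), is a `W`-equivalence
colocally on `C`. -/
def IsColocallyEquiv (W : FunctorClass.{u}) (F : X ⥤ Y) (P : Y ⥤ C) : Prop :=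
  ∀ c : C, W (triangleCoslice F P c)

end LocColoc

/-- A square `(u, u', v, w, α)` is weakly `W`-exact. -/
def IsWeakExactSquare (W : FunctorClass.{u}) {A A' B B' : Type u} [SmallCategory A]
    [SmallCategory A'] [SmallCategory B] [SmallCategory B'] (u : A ⥤ B) (u' : A' ⥤ B')
    (v : A' ⥤ A) (w : B' ⥤ B) (α : v ⋙ u ⟶ u' ⋙ w) : Prop :=
  ∀ b' : B', IsColocallyEquiv W (squareSlice u u' v w α b') (CostructuredArrow.proj u (w.obj b'))

/-- `w : B' ⥤ B` is a discrete fibration. -/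
def IsDiscreteFibration {B' B : Type u} [SmallCategory B'] [SmallCategory B]
    (w : B' ⥤ B) : Prop :=
  ∀ (b' : B') (b : B) (g : b ⟶ w.obj b'),
    ∃! p : Σ b₀ : B', b₀ ⟶ b', ∃ h : w.obj p.1 = b, w.map p.2 = eqToHom h ≫ g

/-- The coarse fundamental localizer: functors whose source and target are both empty or
both nonempty. -/
def coarseLocalizer : FunctorClass.{u} :=
  @fun A B _ _ _ => Nonempty A ↔ Nonempty B

/-- The map induced on sets of connected components. -/
def π₀map {A B : Type u} [SmallCategory A] [SmallCategory B] (F : A ⥤ B) :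
    ConnectedComponents A → ConnectedComponents B :=
  F.mapConnectedComponents

/-- The fundamental localizer `W₀` of `0`-equivalences: functors inducing a bijection on
connected components. -/
def W₀ : FunctorClass.{u} :=
  @fun _ _ _ _ F => Function.Bijective (π₀map F)

/-- A square in `Cat`: four small categories, four functors and a `2`-cell
`α : u ∘ v ⟶ w ∘ u'`. -/
structure CatSquare : Type (u + 1) where
  {A' : Type u}
  {A : Type u}
  {B' : Type u}
  {B : Type u}
  [instA' : SmallCategory A']
  [instA : SmallCategory A]
  [instB' : SmallCategory B']
  [instB : SmallCategory B]
  u : A ⥤ B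
  u' : A' ⥤ B'
  v : A' ⥤ A
  w : B' ⥤ B
  α : v ⋙ u ⟶ u' ⋙ w

attribute [instance] CatSquare.instA' CatSquare.instA CatSquare.instB' CatSquare.instB

/-- A bundled square is `W`-exact. -/
def CatSquare.IsExact (W : FunctorClass.{u}) (S : CatSquare.{u}) : Prop :=
  IsExactSquare W S.u S.u' S.v S.w S.α

/-- The opposite of a square. -/
def CatSquare.op (S : CatSquare.{u}) : CatSquare.{u} :=
  ⟨S.w.op, S.v.op, S.u'.op, S.u.op, squareOpCell S.u S.u' S.v S.w S.α⟩

/-- The comma square associated with `u : A ⥤ B` and `w : B' ⥤ B`. -/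
def commaSquare {A B B' : Type u} [SmallCategory A] [SmallCategory B] [SmallCategory B']
    (u : A ⥤ B) (w : B' ⥤ B) : CatSquare.{u} :=
  ⟨u, Comma.snd u w, Comma.fst u w, w, Comma.natTrans u w⟩

/-- The comma square `D^g_{u, b}` of `u : A ⥤ B` at an object `b : B`. -/
def commaObjSquare {A B : Type u} [SmallCategory A] [SmallCategory B] (u : A ⥤ B) (b : B) :
    CatSquare.{u} :=
  commaSquare u (Functor.fromPUnit.{u} b)

/-- The dual comma square `D^d_{v, a}` of `v : A' ⥤ A` at an object `a : A`. -/
def commaObjSquareD {A' A : Type u} [SmallCategory A'] [SmallCategory A] (v : A' ⥤ A)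
    (a : A) : CatSquare.{u} :=
  commaSquare (Functor.fromPUnit.{u} a) v

/-- The square with top edge `F : A ⥤ B`, the canonical functors `A ⥤ e`, `B ⥤ e` as
vertical edges, identity bottom edge and identity `2`-cell. -/
def starSquare {A B : Type u} [SmallCategory A] [SmallCategory B] (F : A ⥤ B) :
    CatSquare.{u} :=
  ⟨Functor.star B, Functor.star A, F, 𝟭 (PtCat.{u}), 𝟙 (F ⋙ Functor.star B)⟩

/-- The square with all four corners of the form `(A, e, e, e)`, canonical edges and
identity `2`-cell. -/
def ptSquare (A : Type u) [SmallCategory A] : CatSquare.{u} :=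
  ⟨𝟭 (PtCat.{u}), Functor.star A, Functor.star A, 𝟭 (PtCat.{u}), 𝟙 (Functor.star A)⟩

/-- `Q` is stable under horizontal composition of squares (condition CS1h). -/
def StableHComp (Q : CatSquare.{u} → Prop) : Prop :=
  ∀ {A A' A'' B B' B'' : Type u}
    [SmallCategory A] [SmallCategory A'] [SmallCategory A'']
    [SmallCategory B] [SmallCategory B'] [SmallCategory B'']
    (u : A ⥤ B) (u' : A' ⥤ B') (u'' : A'' ⥤ B'')
    (v : A' ⥤ A) (w : B' ⥤ B) (v' : A'' ⥤ A') (w' : B'' ⥤ B')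
    (α : v ⋙ u ⟶ u' ⋙ w) (α' : v' ⋙ u' ⟶ u'' ⋙ w'),
    Q ⟨u, u', v, w, α⟩ → Q ⟨u', u'', v', w', α'⟩ →
    Q ⟨u, u'', v' ⋙ v, w' ⋙ w, hcomp2cell α α'⟩

/-- `Q` is stable under vertical composition of squares (condition CS1v). -/
def StableVComp (Q : CatSquare.{u} → Prop) : Prop :=
  ∀ {A A' B B' C C' : Type u}
    [SmallCategory A] [SmallCategory A'] [SmallCategory B] [SmallCategory B']
    [SmallCategory C] [SmallCategory C']
    (u : A ⥤ B) (u' : A' ⥤ B') (v : A' ⥤ A) (w : B' ⥤ B)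
    (x : B ⥤ C) (x' : B' ⥤ C') (y : C' ⥤ C)
    (α : v ⋙ u ⟶ u' ⋙ w) (β : w ⋙ x ⟶ x' ⋙ y),
    Q ⟨u, u', v, w, α⟩ → Q ⟨x, x', w, y, β⟩ →
    Q ⟨u ⋙ x, u' ⋙ x', v, y, vcomp2cell α β⟩

/-- `Q` satisfies horizontal descent (condition CS2h). -/
def HorizontalDescent (Q : CatSquare.{u} → Prop) : Prop :=
  ∀ {A A' B B' : Type u}
    [SmallCategory A] [SmallCategory A'] [SmallCategory B] [SmallCategory B']
    (u : A ⥤ B) (u' : A' ⥤ B') (v : A' ⥤ A) (w : B' ⥤ B) (α : v ⋙ u ⟶ u' ⋙ w)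
    (J : Type u) (Aj Bj : J → Type u)
    [∀ j, SmallCategory (Aj j)] [∀ j, SmallCategory (Bj j)]
    (uj : ∀ j, Aj j ⥤ Bj j) (vj : ∀ j, Aj j ⥤ A') (wj : ∀ j, Bj j ⥤ B')
    (αj : ∀ j, vj j ⋙ u' ⟶ uj j ⋙ wj j),
    (∀ b' : B', ∃ j, ∃ b : Bj j, (wj j).obj b = b') →
    (∀ j, Q ⟨u', uj j, vj j, wj j, αj j⟩) →
    (∀ j, Q ⟨u, uj j, vj j ⋙ v, wj j ⋙ w, hcomp2cell α (αj j)⟩) →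
    Q ⟨u, u', v, w, α⟩

/-- `Q` satisfies local descent (condition CS3h). -/
def LocalDescent (Q : CatSquare.{u} → Prop) : Prop :=
  ∀ {A A' B B' : Type u}
    [SmallCategory A] [SmallCategory A'] [SmallCategory B] [SmallCategory B']
    (u : A ⥤ B) (u' : A' ⥤ B') (v : A' ⥤ A) (w : B' ⥤ B) (α : v ⋙ u ⟶ u' ⋙ w),
    (∀ b' : B', Q ⟨u, Comma.snd u' (Functor.fromPUnit.{u} b'),
        Comma.fst u' (Functor.fromPUnit.{u} b') ⋙ v, Functor.fromPUnit.{u} b' ⋙ w,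
        hcomp2cell α (Comma.natTrans u' (Functor.fromPUnit.{u} b'))⟩) →
    Q ⟨u, u', v, w, α⟩

/-- `Q` satisfies colocal descent (condition CS3v). -/
def ColocalDescent (Q : CatSquare.{u} → Prop) : Prop :=
  ∀ {A A' B B' : Type u}
    [SmallCategory A] [SmallCategory A'] [SmallCategory B] [SmallCategory B']
    (u : A ⥤ B) (u' : A' ⥤ B') (v : A' ⥤ A) (w : B' ⥤ B) (α : v ⋙ u ⟶ u' ⋙ w),
    (∀ a : A, Q ⟨Functor.fromPUnit.{u} a ⋙ u,
        Comma.snd (Functor.fromPUnit.{u} a) v ⋙ u',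
        Comma.fst (Functor.fromPUnit.{u} a) v, w,
        vcomp2cell (Comma.natTrans (Functor.fromPUnit.{u} a) v) α⟩) →
    Q ⟨u, u', v, w, α⟩

/-- `Q` is stable under passing to opposite squares (condition CS4). -/
def OpStable (Q : CatSquare.{u} → Prop) : Prop :=
  ∀ S : CatSquare.{u}, Q S → Q S.op

/-- Isomorphism of squares. -/
def CatSquare.Isomorphic (S T : CatSquare.{u}) : Prop :=
  ∃ (eA' : S.A' ⥤ T.A') (eA : S.A ⥤ T.A) (eB' : S.B' ⥤ T.B') (eB : S.B ⥤ T.B)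
    (_ : IsCatIso eA') (_ : IsCatIso eA) (_ : IsCatIso eB') (_ : IsCatIso eB)
    (hv : S.v ⋙ eA = eA' ⋙ T.v) (hu : S.u ⋙ eB = eA ⋙ T.u)
    (hu' : S.u' ⋙ eB' = eA' ⋙ T.u') (hw : S.w ⋙ eB = eB' ⋙ T.w),
    Functor.whiskerRight S.α eB =
      eqToHom (by rw [Functor.assoc, hu, ← Functor.assoc, hv, Functor.assoc]) ≫
        Functor.whiskerLeft eA' T.α ≫
        eqToHom (by rw [← Functor.assoc, ← hu', Functor.assoc, ← hw, ← Functor.assoc])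

/-- A bundled square is a right Beck–Chevalley square. -/
def CatSquare.IsRightBC (S : CatSquare.{u}) : Prop :=
  ∃ (v'' : S.A ⥤ S.A') (w'' : S.B ⥤ S.B') (adjv : v'' ⊣ S.v) (adjw : w'' ⊣ S.w),
    IsIso (baseChangeL adjv adjw S.α)

/-- The functor `A/b ⥤ B/b` induced by `u : A ⥤ B`, in terms of comma categories. -/
def commaSliceInduced {A B : Type u} [SmallCategory A] [SmallCategory B] (u : A ⥤ B)
    (b : B) : Comma u (Functor.fromPUnit.{u} b) ⥤ Comma (𝟭 B) (Functor.fromPUnit.{u} b) where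
  obj x := { left := u.obj x.left, right := x.right, hom := x.hom }
  map {x y} f := { left := u.map f.left, right := f.right, w := by simp [f.w] }

/-- The cartesian square expressing `A/b` as the pullback of `u : A ⥤ B` along the
forgetful functor `B/b ⥤ B`. -/
def sliceCartSquare {A B : Type u} [SmallCategory A] [SmallCategory B] (u : A ⥤ B)
    (b : B) : CatSquare.{u} :=
  ⟨u, commaSliceInduced u b, Comma.fst u (Functor.fromPUnit.{u} b),
    Comma.fst (𝟭 B) (Functor.fromPUnit.{u} b),
    𝟙 (Comma.fst u (Functor.fromPUnit.{u} b) ⋙ u)⟩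

/-! By colocal descent along the top edge `F`, it suffices that for each `b` the square obtained
by pasting the dual comma square `D^d_{F,b}` on top of `starSquare F` lies in `Q`. Since the
bottom edge of `starSquare F` ends in `e`, that pasted square is, on the nose, the point square
of `b\A`, which lies in `Q` by (CI1₀) because `F` is coaspherical. -/

section Coaspherical

variable {W : FunctorClass.{u}}

lemma IsWeakFundamentalLocalizer.mem_of_inverse (hW : IsWeakFundamentalLocalizer W)
    {A B : Type u} [SmallCategory A] [SmallCategory B] (F : A ⥤ B) (G : B ⥤ A)
    (hFG : F ⋙ G = 𝟭 A) (hGF : G ⋙ F = 𝟭 B) : W F :=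
  hW.retract_mem G F hGF (hFG ▸ hW.id_mem A)

lemma IsAsphericalCat.of_functor (hW : IsWeakFundamentalLocalizer W)
    {A B : Type u} [SmallCategory A] [SmallCategory B] (F : A ⥤ B) (hF : W F)
    (hB : IsAsphericalCat W B) : IsAsphericalCat W A :=
  hW.comp_mem F (Functor.star B) hF hB

variable {A B : Type u} [SmallCategory A] [SmallCategory B]

/- Mathlib's `StructuredArrow b F` is the comma category over `Functor.fromPUnit.{0} b`, while
the comma squares use `Functor.fromPUnit.{u} b`; the two categories are isomorphic, not equal. -/
def commaToStructuredArrow (F : A ⥤ B) (b : B) :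
    Comma (Functor.fromPUnit.{u} b) F ⥤ StructuredArrow b F where
  obj x := ⟨⟨⟨⟩⟩, x.right, x.hom⟩
  map f := ⟨𝟙 _, f.right, by simp [← f.w]⟩

def structuredArrowToComma (F : A ⥤ B) (b : B) :
    StructuredArrow b F ⥤ Comma (Functor.fromPUnit.{u} b) F where
  obj x := ⟨⟨⟨⟩⟩, x.right, x.hom⟩
  map f := ⟨𝟙 _, f.right, by simp [f.w]⟩

lemma IsCoasphericalFunctor.isAsphericalCat_comma (hW : IsWeakFundamentalLocalizer W)
    {F : A ⥤ B} (hF : IsCoasphericalFunctor W F) (b : B) :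
    IsAsphericalCat W (Comma (Functor.fromPUnit.{u} b) F) :=
  IsAsphericalCat.of_functor hW (commaToStructuredArrow F b)
    (hW.mem_of_inverse _ (structuredArrowToComma F b) rfl rfl) (hF b)

end Coaspherical

theorem statement13 (W : FunctorClass.{u}) (hW : IsWeakFundamentalLocalizer W)
    (Q : CatSquare.{u} → Prop)
    (cs3v : ColocalDescent Q)
    (ci10 : ∀ (A : Type u) [SmallCategory A], IsAsphericalCat W A → Q (ptSquare A)) :
    ∀ {A B : Type u} [SmallCategory A] [SmallCategory B] (F : A ⥤ B),
      IsCoasphericalFunctor W F → Q (starSquare F) := by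
  intro A B _ _ F hF
  refine cs3v _ _ _ _ _ fun b => ?_
  exact ci10 _ (hF.isAsphericalCat_comma hW b)

end Paper
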